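/- Let S be a semigroup and a an element of S, where for s, t ∈ S we write s R* t iff for all x, y ∈ S¹, xs = ys iff xt = yt (S¹ being S with an identity adjoined). Let x, y ∈ S satisfy: ax R* x, ay R* y (membership in P₁), and x R*ᵃ y in the variant S^a (i.e., for all u, v ∈ (S^a)¹, u⋆x = v⋆x iff u⋆y = v⋆y where u⋆x = uax). Then x R* y in S. -/

import Mathlib

/-- The sandwich product on `(S^a)¹`, the variant `S^a` with an identity adjoined
(represented as `Option S`, with `none` the adjoined identity). -/
def starOne {S : Type*} [Semigroup S] (a : S) : Option S → Option S → Option S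
  | none, z => z
  | some u, none => some u
  | some u, some v => some (u * a * v)

/-- One direction of the main theorem, stated so it can be applied symmetrically. -/
theorem variant_Rstar_aux {S : Type*} [Semigroup S] (a x y : S)
    (hx : ∀ u v : WithOne S, u * ↑(a * x) = v * ↑(a * x) ↔ u * ↑x = v * ↑x)
    (hy : ∀ u v : WithOne S, u * ↑(a * y) = v * ↑(a * y) ↔ u * ↑y = v * ↑y)
    (hxy : ∀ u v : Option S,
      starOne a u (some x) = starOne a v (some x) →
      starOne a u (some y) = starOne a v (some y)) :
    ∀ u v : WithOne S, u * ↑x = v * ↑x → u * ↑y = v * ↑y := by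
  -- versions of the hypotheses purely inside `S`
  have Hx : ∀ u v : S, u * (a * x) = v * (a * x) ↔ u * x = v * x := fun u v => by
    simpa only [← WithOne.coe_mul, WithOne.coe_inj] using hx (↑u) (↑v)
  have Hx1 : ∀ v : S, v * (a * x) = a * x ↔ v * x = x := fun v => by
    simpa only [one_mul, ← WithOne.coe_mul, WithOne.coe_inj] using hx (↑v) 1
  have Hy : ∀ u v : S, u * (a * y) = v * (a * y) ↔ u * y = v * y := fun u v => by
    simpa only [← WithOne.coe_mul, WithOne.coe_inj] using hy (↑u) (↑v)
  have Hy1 : ∀ v : S, v * (a * y) = a * y ↔ v * y = y := fun v => by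
    simpa only [one_mul, ← WithOne.coe_mul, WithOne.coe_inj] using hy (↑v) 1
  have Hxy : ∀ u v : S, u * a * x = v * a * x → u * a * y = v * a * y := fun u v h => by
    have := hxy (some u) (some v)
    simp only [starOne, Option.some.injEq] at this
    exact this h
  -- the one-sided version: `v * x = x → v * y = y`
  have key : ∀ v : S, v * x = x → v * y = y := by
    intro v h
    -- step 1: v * (a * x) = a * x
    have h1 : v * (a * x) = a * x := (Hx1 v).mpr h
    -- step 2: (v * a) * (a * x) = a * (a * x)
    have h2 : v * a * (a * x) = a * (a * x) := (Hx (v * a) a).mpr (by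
      rw [mul_assoc]; exact h1)
    -- step 3: transfer through the variant relation
    have h3 : v * a * (a * y) = a * (a * y) := by
      have := Hxy (v * a) a (by simp only [mul_assoc] at h2 ⊢; exact h2)
      simp only [mul_assoc] at this ⊢; exact this
    -- step 4: back down with hy
    have h4 : v * a * y = a * y := (Hy (v * a) a).mp h3
    -- step 5: v * (a * y) = a * y, hence v * y = y
    exact (Hy1 v).mp (by rw [← mul_assoc]; exact h4)
  intro u v h
  induction u using WithOne.recOneCoe with
  | one =>
    induction v using WithOne.recOneCoe with
    | one => rfl
    | coe v =>
      have h' : v * x = x := by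
        simpa only [one_mul, ← WithOne.coe_mul, WithOne.coe_inj] using h.symm
      have := key v h'
      simp only [one_mul, ← WithOne.coe_mul, WithOne.coe_inj]
      exact this.symm
  | coe u =>
    induction v using WithOne.recOneCoe with
    | one =>
      have h' : u * x = x := by
        simpa only [one_mul, ← WithOne.coe_mul, WithOne.coe_inj] using h
      have := key u h'
      simp only [one_mul, ← WithOne.coe_mul, WithOne.coe_inj]
      exact this
    | coe v =>
      have h' : u * x = v * x := by
        simpa only [← WithOne.coe_mul, WithOne.coe_inj] using h
      have h1 : u * (a * x) = v * (a * x) := (Hx u v).mpr h'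
      have h2 : u * a * y = v * a * y := Hxy u v (by
        simp only [mul_assoc] at h1 ⊢; exact h1)
      have h3 : u * y = v * y := (Hy u v).mp (by
        simp only [mul_assoc] at h2 ⊢; exact h2)
      simpa only [← WithOne.coe_mul, WithOne.coe_inj] using h3

/-- If `x, y ∈ P₁` (i.e. `ax R* x` and `ay R* y`) and `x R*ᵃ y` in the variant `S^a`,
then `x R* y` in `S`. -/
theorem variant_Rstar_cap_P1 {S : Type*} [Semigroup S] (a x y : S)
    (hx : ∀ u v : WithOne S, u * ↑(a * x) = v * ↑(a * x) ↔ u * ↑x = v * ↑x)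
    (hy : ∀ u v : WithOne S, u * ↑(a * y) = v * ↑(a * y) ↔ u * ↑y = v * ↑y)
    (hxy : ∀ u v : Option S,
      starOne a u (some x) = starOne a v (some x) ↔
      starOne a u (some y) = starOne a v (some y)) :
    ∀ u v : WithOne S, u * ↑x = v * ↑x ↔ u * ↑y = v * ↑y := by
  intro u v
  constructor
  · exact variant_Rstar_aux a x y hx hy (fun u v => (hxy u v).mp) u v
  · exact variant_Rstar_aux a y x hy hx (fun u v => (hxy u v).mpr) u v
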